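/- Let A be a proper pervasive uniform algebra on a compact Hausdorff space X containing a nonconstant function u ∈ A with |u(x)| = 1 for all x ∈ X. Then the maximal ideal space of A is strictly larger than X; equivalently, there exists a character φ of A that is not evaluation at any point of X. -/

import Mathlib

/-!
If `u` were invertible in `A`, its inverse would be `conj u` because `|u| = 1`, so `A` would
contain `u` and `conj u` and hence, being closed, every continuous function of `u`
(continuous functional calculus). A continuous cutoff of `Re (c u)` that vanishes on one
nonempty open set and equals `1` on another, together with pervasiveness on the two closed
pieces, then approximates any continuous function, so `A = C(X)`. Hence `u` lies in a maximal
ideal of `A`, whose character cannot be evaluation at a point since `u` has no zeros.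
-/

variable {X : Type} [TopologicalSpace X] [CompactSpace X] [T2Space X]

/-- A uniform algebra `A` on `X` is pervasive if for every nonempty proper closed subset
`F` of `X`, the restrictions of elements of `A` to `F` are dense in `C(F, ℂ)`. -/
def Pervasive (A : Subalgebra ℂ C(X, ℂ)) : Prop :=
  ∀ F : Set X, IsClosed F → F.Nonempty → F ≠ Set.univ →
    Dense ((fun f : C(X, ℂ) => f.restrict F) '' (A : Set C(X, ℂ)))

open Complex ComplexConjugate Real

lemma norm_ofReal_mul_le {s e : ℝ} {z : ℂ} (hs : 0 ≤ s) (hz : s ≠ 0 → ‖z‖ ≤ e) :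
    ‖(s : ℂ) * z‖ ≤ s * e := by
  rcases hs.eq_or_lt with rfl | hs
  · simp
  · rw [norm_mul, norm_real, Real.norm_of_nonneg hs.le]
    exact mul_le_mul_of_nonneg_left (hz hs.ne') hs.le

section

variable {Y : Type*} [TopologicalSpace Y] [CompactSpace Y]

lemma ContinuousMap.cfc_apply_apply {φ : ℂ → ℂ} (hφ : Continuous φ) (f : C(Y, ℂ)) (y : Y) :
    cfc φ f y = φ (f y) := by
  have := StarAlgHom.map_cfc (ContinuousMap.evalStarAlgHom ℂ ℂ y) φ f
  rw [evalStarAlgHom_apply, evalStarAlgHom_apply] at this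
  rw [this]
  exact cfc_algebraMap (A := ℂ) (f y) φ

lemma Subalgebra.cfc_mem_of_isClosed {A : Subalgebra ℂ C(Y, ℂ)}
    (hA : IsClosed (A : Set C(Y, ℂ))) {f : C(Y, ℂ)} (hf : f ∈ A) (hsf : star f ∈ A)
    (φ : ℂ → ℂ) : cfc φ f ∈ A := by
  have hadj : (StarAlgebra.adjoin ℂ {f} : Set C(Y, ℂ)) ⊆ A := by
    rw [← StarSubalgebra.coe_toSubalgebra, StarAlgebra.adjoin_toSubalgebra, Set.star_singleton]
    exact Algebra.adjoin_le (Set.union_subset (Set.singleton_subset_iff.2 hf)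
      (Set.singleton_subset_iff.2 hsf))
  have helem := cfc_mem_elemental φ f
  rw [StarAlgebra.elemental, ← SetLike.mem_coe, StarSubalgebra.topologicalClosure_coe] at helem
  exact closure_minimal hadj hA helem

end

namespace Pervasive

variable {Y : Type} [TopologicalSpace Y] [CompactSpace Y] {A : Subalgebra ℂ C(Y, ℂ)}

lemma exists_norm_sub_lt (hA : Pervasive A) {F : Set Y} (hFc : IsClosed F) (hFn : F.Nonempty)
    (hFu : F ≠ Set.univ) (g : C(Y, ℂ)) {ε : ℝ} (hε : 0 < ε) :
    ∃ b ∈ A, ∀ y ∈ F, ‖g y - b y‖ < ε := by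
  have : CompactSpace F := isCompact_iff_compactSpace.mp hFc.isCompact
  obtain ⟨-, ⟨b, hbA, rfl⟩, hb⟩ :=
    Metric.mem_closure_iff.mp (hA F hFc hFn hFu (g.restrict F)) ε hε
  refine ⟨b, hbA, fun y hy => ?_⟩
  rw [← dist_eq_norm]
  exact (ContinuousMap.dist_apply_le_dist (f := g.restrict F) (g := b.restrict F) ⟨y, hy⟩).trans_lt
    hb

/-- Glue approximations on the two overlapping closed sets `{t ≤ 1}` and `{0 ≤ t}` with the
partition of unity `1 - w, w`. -/
lemma dense_of_smoothTransition_mem (hA : Pervasive A) {t : Y → ℝ} (ht : Continuous t)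
    {w : C(Y, ℂ)} (hwA : w ∈ A) (hw : ∀ y, w y = smoothTransition (t y))
    (hneg : ∃ y, t y < 0) (hpos : ∃ y, 1 < t y) : Dense (A : Set C(Y, ℂ)) := by
  obtain ⟨y₀, hy₀⟩ := hneg
  obtain ⟨y₁, hy₁⟩ := hpos
  intro g
  rw [Metric.mem_closure_iff]
  intro ε hε
  obtain ⟨b, hbA, hb⟩ := hA.exists_norm_sub_lt (isClosed_le ht continuous_const)
    ⟨y₀, hy₀.le.trans zero_le_one⟩ ((Set.ne_univ_iff_exists_notMem _).2 ⟨y₁, hy₁.not_ge⟩) g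
    (half_pos hε)
  obtain ⟨a, haA, ha⟩ := hA.exists_norm_sub_lt (isClosed_le continuous_const ht)
    ⟨y₁, zero_le_one.trans hy₁.le⟩ ((Set.ne_univ_iff_exists_notMem _).2 ⟨y₀, hy₀.not_ge⟩) g
    (half_pos hε)
  refine ⟨(1 - w) * b + w * a,
    add_mem (mul_mem (sub_mem (one_mem A) hwA) hbA) (mul_mem hwA haA), ?_⟩
  refine lt_of_le_of_lt ((ContinuousMap.dist_le (half_pos hε).le).2 fun y => ?_) (half_lt_self hε)
  set s := smoothTransition (t y)
  have hsplit : g y - ((1 - w) * b + w * a) y =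
      ((1 - s : ℝ) : ℂ) * (g y - b y) + (s : ℂ) * (g y - a y) := by
    simp only [ContinuousMap.add_apply, ContinuousMap.mul_apply, ContinuousMap.sub_apply,
      ContinuousMap.one_apply, hw]
    push_cast
    ring
  have hF : 1 - s ≠ 0 → t y ≤ 1 := fun h => not_lt.1 fun h' =>
    h (by simp only [s, smoothTransition.one_of_one_le h'.le, sub_self])
  have hK : s ≠ 0 → 0 ≤ t y := fun h => not_lt.1 fun h' =>
    h (smoothTransition.zero_of_nonpos h'.le)
  have hb' : ‖((1 - s : ℝ) : ℂ) * (g y - b y)‖ ≤ (1 - s) * (ε / 2) :=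
    norm_ofReal_mul_le (sub_nonneg.2 (smoothTransition.le_one _)) fun h => (hb y (hF h)).le
  have ha' : ‖(s : ℂ) * (g y - a y)‖ ≤ s * (ε / 2) :=
    norm_ofReal_mul_le (smoothTransition.nonneg _) fun h => (ha y (hK h)).le
  calc dist (g y) (((1 - w) * b + w * a) y)
      = ‖((1 - s : ℝ) : ℂ) * (g y - b y) + (s : ℂ) * (g y - a y)‖ := by
        rw [dist_eq_norm, hsplit]
    _ ≤ (1 - s) * (ε / 2) + s * (ε / 2) := (norm_add_le _ _).trans (add_le_add hb' ha')
    _ = ε / 2 := by ring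

/-- The cutoff is applied to `t = 3 Re(conj d (z - f y₀)) / |d|² - 1` with `d = f y₁ - f y₀`,
so `t (f y₀) = -1` and `t (f y₁) = 2`. -/
lemma dense_of_star_mem (hA : Pervasive A) (hAc : IsClosed (A : Set C(Y, ℂ))) {f : C(Y, ℂ)}
    (hf : f ∈ A) (hsf : star f ∈ A) {y₀ y₁ : Y} (hne : f y₀ ≠ f y₁) :
    Dense (A : Set C(Y, ℂ)) := by
  set d := f y₁ - f y₀
  have hd : normSq d ≠ 0 := normSq_eq_zero.not.2 (sub_ne_zero.2 hne.symm)
  set t : ℂ → ℝ := fun z => 3 * ((conj d * (z - f y₀)).re / normSq d) - 1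
  have ht : Continuous t := by fun_prop
  refine hA.dense_of_smoothTransition_mem (ht.comp f.continuous)
    (Subalgebra.cfc_mem_of_isClosed hAc hf hsf fun z => (smoothTransition (t z) : ℂ))
    (fun y => ContinuousMap.cfc_apply_apply (by fun_prop) f y) ⟨y₀, ?_⟩ ⟨y₁, ?_⟩
  · simp [t]
  · show 1 < 3 * ((conj d * d).re / normSq d) - 1
    rw [← normSq_eq_conj_mul_self, ofReal_re, div_self hd]
    norm_num

lemma apply_eq_of_star_mem (hA : Pervasive A) (hAc : IsClosed (A : Set C(Y, ℂ))) (hAt : A ≠ ⊤)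
    {f : C(Y, ℂ)} (hf : f ∈ A) (hsf : star f ∈ A) (y₀ y₁ : Y) : f y₀ = f y₁ := by
  by_contra hne
  refine hAt (SetLike.coe_injective ?_)
  rw [Algebra.coe_top, ← hAc.closure_eq]
  exact (hA.dense_of_star_mem hAc hf hsf hne).closure_eq

end Pervasive

lemma ContinuousMap.eq_star_of_mul_eq_one {Y : Type*} [TopologicalSpace Y] {u v : C(Y, ℂ)}
    (hu : ∀ y, ‖u y‖ = 1) (huv : u * v = 1) : v = star u := by
  refine (left_inv_eq_right_inv (a := u) ?_ huv).symm
  ext y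
  simp [conj_mul', hu]

theorem stmt_14 (A : Subalgebra ℂ C(X, ℂ))
    (hclosed : IsClosed (A : Set C(X, ℂ)))
    (hperv : Pervasive A) (hproper : A ≠ ⊤)
    (u : C(X, ℂ)) (hu : u ∈ A) (hunc : ∃ x y : X, u x ≠ u y)
    (humod : ∀ x : X, ‖u x‖ = 1) :
    ∃ φ : A →ₐ[ℂ] ℂ, ∀ x : X, ∃ f : A, φ f ≠ (f : C(X, ℂ)) x := by
  have : CompleteSpace A := hclosed.completeSpace_coe
  have hnu : ¬IsUnit (⟨u, hu⟩ : A) := by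
    intro hunit
    obtain ⟨v, hv⟩ := hunit.exists_right_inv
    have hstar : star u ∈ A :=
      ContinuousMap.eq_star_of_mul_eq_one humod (congrArg Subtype.val hv) ▸ v.2
    obtain ⟨x, y, hxy⟩ := hunc
    exact hxy (hperv.apply_eq_of_star_mem hclosed hproper hu hstar x y)
  obtain ⟨φ, hφ⟩ := WeakDual.CharacterSpace.exists_apply_eq_zero hnu
  refine ⟨WeakDual.CharacterSpace.equivAlgHom φ, fun x => ⟨⟨u, hu⟩, ?_⟩⟩
  rw [WeakDual.CharacterSpace.equivAlgHom_coe, hφ]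
  intro h
  simpa [← h] using humod x
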